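/- arXiv:1312.4062 — 5 statements merged into one kernel-verified Lean document; each statement's English description precedes it below -/
import Mathlib

section
/- Let φ : ℝ → ℝ be such that its Fourier transform φ̂ is nonnegative, bounded below by some m > 0 on [-π,π], and satisfies φ̂(ξ) = O(|ξ|^{-(1+ε)}) as |ξ|→∞ for some ε > 0. Define L̂(ξ) = (2π)^{-1/2} φ̂(ξ) / Σ_{j∈ℤ} φ̂(ξ+2πj). Then L̂ ∈ L¹(ℝ) with ∫_ℝ |L̂(ξ)| dξ = (2π)^{1/2}. -/
open Real MeasureTheory Set

/-- If the Fourier transform `F = φ̂` of an interpolator is continuous, nonnegative,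
bounded below by `m > 0` on `[-π, π]`, and `O(|ξ|^{-(1+ε)})` at infinity, then the
fundamental multiplier `L̂(ξ) = (2π)^{-1/2} F(ξ) / ∑_{j ∈ ℤ} F(ξ + 2πj)` is in `L¹(ℝ)`
with `∫ |L̂| = (2π)^{1/2}`. -/
theorem stmt1 (F : ℝ → ℝ) (m ε : ℝ) (hm : 0 < m) (hε : 0 < ε)
    (hFcont : Continuous F) (hF0 : ∀ ξ, 0 ≤ F ξ)
    (hFm : ∀ ξ ∈ Icc (-π) π, m ≤ F ξ)
    (hFdecay : ∃ C R : ℝ, ∀ ξ : ℝ, R ≤ |ξ| → F ξ ≤ C * |ξ| ^ (-(1 + ε)))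
    (Lhat : ℝ → ℝ)
    (hL : ∀ ξ, Lhat ξ = (2 * π) ^ (-(1 : ℝ) / 2) * F ξ / ∑' j : ℤ, F (ξ + 2 * π * j)) :
    Integrable Lhat volume ∧ ∫ ξ : ℝ, |Lhat ξ| = (2 * π) ^ ((1 : ℝ) / 2) := by
  obtain ⟨C, R, hCR⟩ := hFdecay
  have hπ : (0:ℝ) < π := Real.pi_pos
  have h2π : (0:ℝ) < 2 * π := by positivity
  set c : ℝ := (2 * π) ^ (-(1:ℝ) / 2) with hc
  have hc0 : 0 < c := Real.rpow_pos_of_pos h2π _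
  set G : ℝ → ℝ := fun ξ => ∑' j : ℤ, F (ξ + 2 * π * j) with hGdef
  -- C is nonnegative
  have hC0 : 0 ≤ C := by
    have h1 : R ≤ |(|R| + 1)| := by
      rw [abs_of_nonneg (by positivity)]
      have := le_abs_self R; linarith
    have h2 := (hF0 (|R| + 1)).trans (hCR _ h1)
    have h3 : (0:ℝ) < |(|R| + 1)| ^ (-(1 + ε)) :=
      Real.rpow_pos_of_pos (by rw [abs_of_nonneg (by positivity)]; positivity) _
    nlinarith
  -- summability of the periodization
  have hsum : ∀ ξ : ℝ, Summable (fun j : ℤ => F (ξ + 2 * π * j)) := by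
    intro ξ
    have hg : Summable (fun j : ℤ => |(j:ℝ)| ^ (-(1 + ε))) :=
      Real.summable_abs_int_rpow (by linarith)
    refine summable_of_isBigO hg (Asymptotics.isBigO_iff.mpr ⟨C * π ^ (-(1 + ε)), ?_⟩)
    set A : ℝ := (|ξ| + |R| + π) / π with hA
    have hApos : (0:ℝ) < A := by positivity
    have hbound : ∀ j : ℤ, A ≤ |(j:ℝ)| →
        ‖F (ξ + 2 * π * j)‖ ≤ C * π ^ (-(1 + ε)) * ‖|(j:ℝ)| ^ (-(1 + ε))‖ := by
      intro j hj
      have hjpos : 0 < |(j:ℝ)| := lt_of_lt_of_le hApos hj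
      have hπj : |ξ| + |R| + π ≤ π * |(j:ℝ)| := by
        rw [hA, div_le_iff₀ hπ] at hj; linarith
      have habs1 : 2 * π * |(j:ℝ)| - |ξ| ≤ |ξ + 2 * π * j| := by
        have h1 : |(ξ + 2 * π * (j:ℝ)) + (-ξ)| ≤ |ξ + 2 * π * (j:ℝ)| + |(-ξ)| := abs_add_le _ _
        rw [abs_neg] at h1
        have h2 : (ξ + 2 * π * (j:ℝ)) + (-ξ) = 2 * π * (j:ℝ) := by ring
        rw [h2, abs_mul, abs_of_pos h2π] at h1
        linarith
      have hAle : π * |(j:ℝ)| ≤ |ξ + 2 * π * j| := by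
        linarith [abs_nonneg R]
      have hRle : R ≤ |ξ + 2 * π * j| := by
        linarith [le_abs_self R, abs_nonneg ξ]
      have hF1 : F (ξ + 2 * π * j) ≤ C * |ξ + 2 * π * j| ^ (-(1 + ε)) := hCR _ hRle
      have hmono : |ξ + 2 * π * (j:ℝ)| ^ (-(1 + ε)) ≤ (π * |(j:ℝ)|) ^ (-(1 + ε)) :=
        Real.rpow_le_rpow_of_nonpos (by positivity) hAle (by linarith)
      have hsplit : (π * |(j:ℝ)|) ^ (-(1 + ε)) = π ^ (-(1 + ε)) * |(j:ℝ)| ^ (-(1 + ε)) :=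
        Real.mul_rpow hπ.le (abs_nonneg _)
      have hnn : (0:ℝ) ≤ |(j:ℝ)| ^ (-(1 + ε)) := Real.rpow_nonneg (abs_nonneg _) _
      calc ‖F (ξ + 2 * π * j)‖ = F (ξ + 2 * π * j) := by
            rw [Real.norm_eq_abs, abs_of_nonneg (hF0 _)]
        _ ≤ C * (π ^ (-(1 + ε)) * |(j:ℝ)| ^ (-(1 + ε))) := by
            refine hF1.trans ?_
            rw [← hsplit]
            exact mul_le_mul_of_nonneg_left hmono hC0
        _ = C * π ^ (-(1 + ε)) * ‖|(j:ℝ)| ^ (-(1 + ε))‖ := by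
            rw [Real.norm_eq_abs, abs_of_nonneg hnn]; ring
    rw [Int.cofinite_eq, Filter.eventually_sup]
    constructor
    · filter_upwards [Filter.eventually_le_atBot (-⌈A⌉)] with j hj
      refine hbound j ?_
      have h1 : (⌈A⌉ : ℝ) ≤ -(j:ℝ) := by
        have : (⌈A⌉ : ℤ) ≤ -j := by omega
        exact_mod_cast this
      calc A ≤ (⌈A⌉ : ℝ) := Int.le_ceil _
        _ ≤ -(j:ℝ) := h1
        _ ≤ |(j:ℝ)| := neg_le_abs _
    · filter_upwards [Filter.eventually_ge_atTop ⌈A⌉] with j hj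
      refine hbound j ?_
      calc A ≤ (⌈A⌉ : ℝ) := Int.le_ceil _
        _ ≤ (j:ℝ) := by exact_mod_cast hj
        _ ≤ |(j:ℝ)| := le_abs_self _
  -- measurability of the periodization
  have hGmeas : Measurable G := by
    have hGeq : G = fun ξ => (∑' j : ℤ, ENNReal.ofReal (F (ξ + 2 * π * j))).toReal := by
      funext ξ
      rw [hGdef]
      rw [← ENNReal.ofReal_tsum_of_nonneg (fun j => hF0 _) (hsum ξ),
        ENNReal.toReal_ofReal (tsum_nonneg fun j => hF0 _)]
    rw [hGeq]
    exact (Measurable.ennreal_tsum fun j =>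
      ENNReal.measurable_ofReal.comp (hFcont.measurable.comp (measurable_add_const _))).ennreal_toReal
  -- positivity of the periodization
  have hGpos : ∀ ξ : ℝ, 0 < G ξ := by
    intro ξ
    set k : ℤ := round (ξ / (2 * π)) with hk
    have h1 : |ξ / (2 * π) - k| ≤ 1 / 2 := abs_sub_round _
    have h2 : |ξ - 2 * π * k| ≤ π := by
      have h3 : ξ - 2 * π * k = (ξ / (2 * π) - k) * (2 * π) := by field_simp
      rw [h3, abs_mul, abs_of_pos h2π]
      calc |ξ / (2 * π) - (k:ℝ)| * (2 * π) ≤ (1/2) * (2 * π) :=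
            mul_le_mul_of_nonneg_right h1 h2π.le
        _ = π := by ring
    rw [abs_le] at h2
    have hmem : ξ + 2 * π * ((-k : ℤ) : ℝ) ∈ Icc (-π) π := by
      push_cast
      constructor <;> [linarith [h2.2]; linarith [h2.1]]
    have hle : F (ξ + 2 * π * ((-k : ℤ) : ℝ)) ≤ G ξ :=
      Summable.le_tsum (hsum ξ) (-k) fun j _ => hF0 _
    exact lt_of_lt_of_le hm ((hFm _ hmem).trans hle)
  -- periodicity of the periodization
  have hGper : ∀ (k : ℤ) (ξ : ℝ), G (ξ + 2 * π * k) = G ξ := by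
    intro k ξ
    have h1 : ∀ j : ℤ, F (ξ + 2 * π * k + 2 * π * j)
        = F (ξ + 2 * π * (((Equiv.addRight k) j : ℤ) : ℝ)) := by
      intro j
      congr 1
      simp only [Equiv.coe_addRight]
      push_cast
      ring
    calc G (ξ + 2 * π * k) = ∑' j : ℤ, F (ξ + 2 * π * (((Equiv.addRight k) j : ℤ) : ℝ)) :=
          tsum_congr h1
      _ = ∑' j : ℤ, F (ξ + 2 * π * j) :=
          (Equiv.addRight k).tsum_eq fun j : ℤ => F (ξ + 2 * π * (j : ℝ))
      _ = G ξ := rfl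
  -- basic facts about Lhat
  have hL' : ∀ ξ, Lhat ξ = c * F ξ / G ξ := fun ξ => hL ξ
  have hLnn : ∀ ξ, 0 ≤ Lhat ξ := fun ξ => by
    rw [hL' ξ]; exact div_nonneg (mul_nonneg hc0.le (hF0 ξ)) (hGpos ξ).le
  have hLmeas : Measurable Lhat := by
    have h1 : Lhat = fun ξ => c * F ξ / G ξ := funext hL'
    rw [h1]
    exact (measurable_const.mul hFcont.measurable).div hGmeas
  -- preimage of the translated interval
  have hIoc : ∀ k : ℤ, (fun x : ℝ => x + 2 * π * k) ⁻¹'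
      Ioc ((-π) + k • (2 * π)) ((-π) + (k + 1) • (2 * π)) = Ioc (-π) π := by
    intro k
    ext x
    simp only [mem_preimage, mem_Ioc, zsmul_eq_mul]
    push_cast
    constructor <;> intro h <;> exact ⟨by linarith [h.1], by linarith [h.2]⟩
  -- the key lintegral computation
  have key : ∫⁻ ξ, ENNReal.ofReal (Lhat ξ) = ENNReal.ofReal ((2 * π) ^ ((1:ℝ) / 2)) := by
    have hU := iUnion_Ioc_add_zsmul h2π (-π)
    calc ∫⁻ ξ, ENNReal.ofReal (Lhat ξ)
        = ∫⁻ ξ in ⋃ k : ℤ, Ioc ((-π) + k • (2 * π)) ((-π) + (k + 1) • (2 * π)),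
            ENNReal.ofReal (Lhat ξ) := by rw [hU, Measure.restrict_univ]
      _ = ∑' k : ℤ, ∫⁻ ξ in Ioc ((-π) + k • (2 * π)) ((-π) + (k + 1) • (2 * π)),
            ENNReal.ofReal (Lhat ξ) :=
          lintegral_iUnion (fun _ => measurableSet_Ioc)
            (pairwise_disjoint_Ioc_add_zsmul (-π) (2 * π)) _
      _ = ∑' k : ℤ, ∫⁻ ξ in Ioc (-π) π, ENNReal.ofReal (Lhat (ξ + 2 * π * k)) := by
          refine tsum_congr fun k => ?_
          rw [← hIoc k]
          exact ((measurePreserving_add_right volume (2 * π * k)).setLIntegral_comp_preimage_emb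
            (measurableEmbedding_addRight _) _ _).symm
      _ = ∑' k : ℤ, ∫⁻ ξ in Ioc (-π) π, ENNReal.ofReal (c * F (ξ + 2 * π * k) / G ξ) := by
          refine tsum_congr fun k => lintegral_congr fun ξ => ?_
          rw [hL' (ξ + 2 * π * k), hGper k ξ]
      _ = ∫⁻ ξ in Ioc (-π) π, ∑' k : ℤ, ENNReal.ofReal (c * F (ξ + 2 * π * k) / G ξ) :=
          (lintegral_tsum fun k => (ENNReal.measurable_ofReal.comp
            ((measurable_const.mul (hFcont.measurable.comp (measurable_add_const _))).div
              hGmeas)).aemeasurable).symm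
      _ = ∫⁻ _ in Ioc (-π) π, ENNReal.ofReal c := by
          refine lintegral_congr fun ξ => ?_
          have hGne : ENNReal.ofReal (G ξ) ≠ 0 := by
            simp [ENNReal.ofReal_eq_zero, not_le, hGpos ξ]
          have hGnt : ENNReal.ofReal (G ξ) ≠ ⊤ := ENNReal.ofReal_ne_top
          calc ∑' k : ℤ, ENNReal.ofReal (c * F (ξ + 2 * π * k) / G ξ)
              = ∑' k : ℤ, ENNReal.ofReal c * ENNReal.ofReal (F (ξ + 2 * π * k))
                  / ENNReal.ofReal (G ξ) := by
                refine tsum_congr fun k => ?_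
                rw [ENNReal.ofReal_div_of_pos (hGpos ξ), ENNReal.ofReal_mul hc0.le]
            _ = ENNReal.ofReal c * (∑' k : ℤ, ENNReal.ofReal (F (ξ + 2 * π * k)))
                  / ENNReal.ofReal (G ξ) := by
                simp_rw [div_eq_mul_inv, ENNReal.tsum_mul_right, ENNReal.tsum_mul_left]
            _ = ENNReal.ofReal c * ENNReal.ofReal (G ξ) / ENNReal.ofReal (G ξ) := by
                rw [← ENNReal.ofReal_tsum_of_nonneg (fun k => hF0 _) (hsum ξ)]
            _ = ENNReal.ofReal c := by
                rw [mul_div_assoc, ENNReal.div_self hGne hGnt, mul_one]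
      _ = ENNReal.ofReal c * ENNReal.ofReal (2 * π) := by
          rw [setLIntegral_const, Real.volume_Ioc]
          congr 1
          ring_nf
      _ = ENNReal.ofReal ((2 * π) ^ ((1:ℝ) / 2)) := by
          rw [← ENNReal.ofReal_mul hc0.le]
          congr 1
          rw [hc]
          calc (2 * π) ^ (-(1:ℝ) / 2) * (2 * π)
              = (2 * π) ^ (-(1:ℝ) / 2) * (2 * π) ^ (1:ℝ) := by rw [Real.rpow_one]
            _ = (2 * π) ^ (-(1:ℝ) / 2 + 1) := (Real.rpow_add h2π _ _).symm
            _ = (2 * π) ^ ((1:ℝ) / 2) := by norm_num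
  -- conclusion
  have hint : Integrable Lhat volume := by
    refine ⟨hLmeas.aestronglyMeasurable, ?_⟩
    rw [hasFiniteIntegral_iff_ofReal (ae_of_all _ hLnn), key]
    exact ENNReal.ofReal_lt_top
  refine ⟨hint, ?_⟩
  calc ∫ ξ : ℝ, |Lhat ξ| = ∫ ξ : ℝ, Lhat ξ := by
        refine integral_congr_ae (ae_of_all _ fun ξ => abs_of_nonneg (hLnn ξ))
    _ = (∫⁻ ξ, ENNReal.ofReal (Lhat ξ)).toReal :=
        integral_eq_lintegral_of_nonneg_ae (ae_of_all _ hLnn) hLmeas.aestronglyMeasurable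
    _ = (2 * π) ^ ((1:ℝ) / 2) := by
        rw [key, ENNReal.toReal_ofReal (Real.rpow_nonneg h2π.le _)]
end

section
/- Under the same hypotheses on φ, the fundamental function L defined as the inverse Fourier transform of L̂(ξ) = (2π)^{-1/2} φ̂(ξ)/Σ_{j∈ℤ} φ̂(ξ+2πj) satisfies L(j) = δ_{0,j} for all integers j, i.e., L(0) = 1 and L(j) = 0 for j ≠ 0. -/
open Real MeasureTheory Set

namespace Stmt2Aux

lemma two_pi_pos : (0:ℝ) < 2 * π := by positivity

lemma int_abs_cofinite (A : ℝ) : {j : ℤ | ¬ A ≤ |(j:ℝ)|}.Finite := by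
  apply (Set.finite_Icc (-⌈A⌉) ⌈A⌉).subset
  intro j hj
  simp only [Set.mem_setOf_eq, not_le] at hj
  have h1 : |(j:ℝ)| ≤ (⌈A⌉ : ℝ) := hj.le.trans (Int.le_ceil A)
  rw [← Int.cast_abs, Int.cast_le] at h1
  exact Set.mem_Icc.2 (abs_le.mp h1)

lemma summable_shift {F : ℝ → ℝ} {ε : ℝ} (hF0 : ∀ ξ, 0 ≤ F ξ) (hε : 0 < ε)
    (hFdecay : ∃ C R : ℝ, ∀ ξ : ℝ, R ≤ |ξ| → F ξ ≤ C * |ξ| ^ (-(1 + ε))) (ξ : ℝ) :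
    Summable fun j : ℤ => F (ξ + 2 * π * j) := by
  obtain ⟨C, R, hCR⟩ := hFdecay
  set C' : ℝ := max C 0 with hC'def
  have hC0 : 0 ≤ C' := le_max_right _ _
  have hCR' : ∀ x : ℝ, R ≤ |x| → F x ≤ C' * |x| ^ (-(1 + ε)) := fun x hx =>
    (hCR x hx).trans (mul_le_mul_of_nonneg_right (le_max_left _ _)
      (Real.rpow_nonneg (abs_nonneg _) _))
  have hsum : Summable fun j : ℤ => C' * |(j:ℝ)| ^ (-(1 + ε)) :=
    (Real.summable_abs_int_rpow (by linarith)).mul_left C'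
  apply Summable.of_norm_bounded_eventually hsum
  rw [Filter.eventually_cofinite]
  apply (int_abs_cofinite (|ξ| + max R 1)).subset
  intro j hj
  simp only [Set.mem_setOf_eq] at hj ⊢
  intro hA
  apply hj
  have hmax1 : (1:ℝ) ≤ max R 1 := le_max_right _ _
  have hj1 : (1:ℝ) ≤ |(j:ℝ)| := by
    have := abs_nonneg ξ; linarith
  have hjx : |(j:ℝ)| ≤ |ξ + 2 * π * j| := by
    have h2 : |(2 * π * (j:ℝ))| = 2 * π * |(j:ℝ)| := by
      rw [abs_mul, abs_of_pos two_pi_pos]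
    have h3 : |(2 * π * (j:ℝ))| - |ξ| ≤ |ξ + 2 * π * j| := by
      have h4 := abs_add_le (ξ + 2 * π * (j:ℝ)) (-ξ)
      rw [show ξ + 2 * π * (j:ℝ) + -ξ = 2 * π * (j:ℝ) by ring, abs_neg] at h4
      linarith
    have hπ := Real.pi_gt_three
    have habsj := abs_nonneg (j:ℝ)
    have habsξ := abs_nonneg ξ
    nlinarith
  have hR : R ≤ |ξ + 2 * π * j| := by
    have : R ≤ max R 1 := le_max_left _ _
    have := abs_nonneg ξ
    linarith
  have h1 : ‖F (ξ + 2 * π * j)‖ = F (ξ + 2 * π * j) := by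
    rw [Real.norm_eq_abs, abs_of_nonneg (hF0 _)]
  rw [h1]
  refine (hCR' _ hR).trans (mul_le_mul_of_nonneg_left ?_ hC0)
  exact Real.rpow_le_rpow_of_nonpos (by linarith) hjx (by linarith)

lemma D_periodic {F : ℝ → ℝ} (ξ : ℝ) (n : ℤ) :
    ∑' j : ℤ, F (ξ + 2 * π * n + 2 * π * j) = ∑' j : ℤ, F (ξ + 2 * π * j) := by
  rw [← (Equiv.addLeft n).tsum_eq (fun j : ℤ => F (ξ + 2 * π * j))]
  apply tsum_congr
  intro j
  simp only [Equiv.coe_addLeft]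
  congr 1
  push_cast
  ring

lemma D_ge_m {F : ℝ → ℝ} {m : ℝ} (hF0 : ∀ ξ, 0 ≤ F ξ)
    (hFm : ∀ ξ ∈ Icc (-π) π, m ≤ F ξ)
    (hsum : ∀ ξ, Summable fun j : ℤ => F (ξ + 2 * π * j)) (ξ : ℝ) :
    m ≤ ∑' j : ℤ, F (ξ + 2 * π * j) := by
  set k : ℤ := -round (ξ / (2 * π)) with hk
  have h2π := two_pi_pos
  have hkabs : |ξ + 2 * π * k| ≤ π := by
    have h := abs_sub_round (ξ / (2 * π))
    have heq : ξ + 2 * π * (k:ℝ) = 2 * π * (ξ / (2 * π) - (round (ξ / (2 * π)) : ℝ)) := by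
      rw [hk]
      push_cast
      field_simp
      ring
    rw [heq, abs_mul, abs_of_pos h2π]
    nlinarith
  have hmem : ξ + 2 * π * k ∈ Icc (-π) π := Set.mem_Icc.2 (abs_le.mp hkabs)
  calc m ≤ F (ξ + 2 * π * k) := hFm _ hmem
    _ ≤ ∑' j : ℤ, F (ξ + 2 * π * j) := Summable.le_tsum (hsum ξ) k fun j _ => hF0 _

lemma D_measurable {F : ℝ → ℝ} (hFcont : Continuous F)
    (hsum : ∀ ξ, Summable fun j : ℤ => F (ξ + 2 * π * j)) :
    Measurable fun ξ => ∑' j : ℤ, F (ξ + 2 * π * j) := by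
  have hmono : Monotone fun n : ℕ => Finset.Icc (-(n:ℤ)) (n:ℤ) := by
    intro a b hab
    exact Finset.Icc_subset_Icc (by exact_mod_cast neg_le_neg (Int.ofNat_le.2 hab))
      (by exact_mod_cast Int.ofNat_le.2 hab)
  have hexh : ∀ j : ℤ, ∃ n : ℕ, j ∈ Finset.Icc (-(n:ℤ)) (n:ℤ) := by
    intro j
    refine ⟨j.natAbs, Finset.mem_Icc.2 ⟨?_, ?_⟩⟩
    · rw [← Int.abs_eq_natAbs]; exact neg_abs_le j
    · rw [← Int.abs_eq_natAbs]; exact le_abs_self j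
  apply measurable_of_tendsto_metrizable' (u := Filter.atTop)
    (f := fun n : ℕ => fun ξ => ∑ j ∈ Finset.Icc (-(n:ℤ)) (n:ℤ), F (ξ + 2 * π * j))
  · intro n
    exact Finset.measurable_sum _ fun j _ =>
      (hFcont.comp (continuous_id.add continuous_const)).measurable
  · rw [tendsto_pi_nhds]
    intro ξ
    exact ((hsum ξ).hasSum).comp (Filter.tendsto_atTop_finset_of_monotone hmono hexh)

lemma F_integrable {F : ℝ → ℝ} {ε : ℝ} (hFcont : Continuous F) (hF0 : ∀ ξ, 0 ≤ F ξ)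
    (hε : 0 < ε)
    (hFdecay : ∃ C R : ℝ, ∀ ξ : ℝ, R ≤ |ξ| → F ξ ≤ C * |ξ| ^ (-(1 + ε))) :
    Integrable F := by
  obtain ⟨C, R, hCR⟩ := hFdecay
  set C' : ℝ := max C 0 with hC'def
  have hC0 : 0 ≤ C' := le_max_right _ _
  have hCR' : ∀ x : ℝ, R ≤ |x| → F x ≤ C' * |x| ^ (-(1 + ε)) := fun x hx =>
    (hCR x hx).trans (mul_le_mul_of_nonneg_right (le_max_left _ _)
      (Real.rpow_nonneg (abs_nonneg _) _))
  set R' : ℝ := max R 1 with hR'def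
  have hR1 : (1:ℝ) ≤ R' := le_max_right _ _
  obtain ⟨x₀, hx₀mem, hx₀⟩ := isCompact_Icc.exists_isMaxOn
    (Set.nonempty_Icc.2 (by linarith : -R' ≤ R')) hFcont.continuousOn
  set B : ℝ := F x₀ with hBdef
  have hB0 : 0 ≤ B := hF0 x₀
  set K : ℝ := max (B * (1 + R') ^ (1 + ε)) (C' * 2 ^ (1 + ε)) with hKdef
  have hK0 : 0 ≤ K := le_trans (by positivity) (le_max_right (B * (1 + R') ^ (1 + ε)) _)
  have key : ∀ x : ℝ, F x ≤ K * (1 + |x|) ^ (-(1 + ε)) := by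
    intro x
    have h1x : (0:ℝ) < 1 + |x| := by positivity
    have hrpow0 : (0:ℝ) ≤ (1 + |x|) ^ (-(1 + ε)) := Real.rpow_nonneg h1x.le _
    rcases le_or_gt (|x|) R' with hc | hc
    · have hFB : F x ≤ B := hx₀ (Set.mem_Icc.2 (abs_le.mp hc))
      have h2 : (1 + R') ^ (-(1 + ε)) ≤ (1 + |x|) ^ (-(1 + ε)) :=
        Real.rpow_le_rpow_of_nonpos h1x (by linarith) (by linarith)
      have h3 : B = (B * (1 + R') ^ (1 + ε)) * (1 + R') ^ (-(1 + ε)) := by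
        rw [mul_assoc, ← Real.rpow_add (by linarith : (0:ℝ) < 1 + R')]
        norm_num
      calc F x ≤ B := hFB
        _ = (B * (1 + R') ^ (1 + ε)) * (1 + R') ^ (-(1 + ε)) := h3
        _ ≤ K * (1 + |x|) ^ (-(1 + ε)) := by
            apply mul_le_mul (le_max_left _ _) h2 (Real.rpow_nonneg (by linarith) _) hK0
    · have hr : R ≤ |x| := le_trans (le_trans (le_max_left R 1) hc.le) le_rfl
      have hx1 : (1:ℝ) ≤ |x| := le_trans hR1 hc.le
      have h3 : |x| ^ (-(1 + ε)) ≤ ((1 + |x|) / 2) ^ (-(1 + ε)) :=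
        Real.rpow_le_rpow_of_nonpos (by linarith) (by linarith) (by linarith)
      have h4 : ((1 + |x|) / 2) ^ (-(1 + ε)) = 2 ^ (1 + ε) * (1 + |x|) ^ (-(1 + ε)) := by
        rw [Real.div_rpow h1x.le (by norm_num : (0:ℝ) ≤ 2),
          Real.rpow_neg (by norm_num : (0:ℝ) ≤ 2)]
        field_simp

      calc F x ≤ C' * |x| ^ (-(1 + ε)) := hCR' x hr
        _ ≤ C' * (2 ^ (1 + ε) * (1 + |x|) ^ (-(1 + ε))) := by
            refine mul_le_mul_of_nonneg_left ?_ hC0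
            rw [← h4]; exact h3
        _ = (C' * 2 ^ (1 + ε)) * (1 + |x|) ^ (-(1 + ε)) := by ring
        _ ≤ K * (1 + |x|) ^ (-(1 + ε)) :=
            mul_le_mul_of_nonneg_right (le_max_right _ _) hrpow0
  have hmaj : Integrable (fun x : ℝ => K * (1 + ‖x‖) ^ (-(1 + ε))) := by
    refine (integrable_one_add_norm ?_).const_mul K
    simp only [Module.finrank_self]
    norm_num
    linarith
  refine hmaj.mono' hFcont.aestronglyMeasurable (ae_of_all _ fun x => ?_)
  rw [Real.norm_eq_abs, abs_of_nonneg (hF0 x), Real.norm_eq_abs]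
  exact key x

lemma Lhat_sum {F : ℝ → ℝ} {Lhat : ℝ → ℝ}
    (hLhat : ∀ ξ, Lhat ξ = (2 * π) ^ (-(1 : ℝ) / 2) * F ξ / ∑' j : ℤ, F (ξ + 2 * π * j))
    (hsum : ∀ ξ, Summable fun j : ℤ => F (ξ + 2 * π * j))
    (hDpos : ∀ ξ, (0:ℝ) < ∑' j : ℤ, F (ξ + 2 * π * j)) (ξ : ℝ) :
    ∑' n : ℤ, Lhat (ξ + 2 * π * n) = (2 * π) ^ (-(1 : ℝ) / 2) := by
  have h1 : ∀ n : ℤ, Lhat (ξ + 2 * π * n)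
      = (2 * π) ^ (-(1 : ℝ) / 2) * F (ξ + 2 * π * n) / ∑' j : ℤ, F (ξ + 2 * π * j) := by
    intro n
    rw [hLhat, D_periodic]
  rw [tsum_congr h1, tsum_div_const, tsum_mul_left, mul_div_assoc,
    div_self (hDpos ξ).ne', mul_one]

end Stmt2Aux
/-- Under the interpolating hypotheses on `F = φ̂`, the fundamental function `L`, defined
as the inverse Fourier transform of `L̂(ξ) = (2π)^{-1/2} F(ξ)/∑_{j} F(ξ+2πj)`, satisfies
the cardinal interpolation conditions `L(j) = δ_{0,j}` for all integers `j`. -/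
theorem stmt2 (F : ℝ → ℝ) (m ε : ℝ) (hm : 0 < m) (hε : 0 < ε)
    (hFcont : Continuous F) (hF0 : ∀ ξ, 0 ≤ F ξ)
    (hFm : ∀ ξ ∈ Icc (-π) π, m ≤ F ξ)
    (hFdecay : ∃ C R : ℝ, ∀ ξ : ℝ, R ≤ |ξ| → F ξ ≤ C * |ξ| ^ (-(1 + ε)))
    (Lhat : ℝ → ℝ)
    (hLhat : ∀ ξ, Lhat ξ = (2 * π) ^ (-(1 : ℝ) / 2) * F ξ / ∑' j : ℤ, F (ξ + 2 * π * j))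
    (L : ℝ → ℂ)
    (hL : ∀ x : ℝ, L x =
      ((2 * π) ^ (-(1 : ℝ) / 2) : ℝ) *
        ∫ ξ : ℝ, (Lhat ξ : ℂ) * Complex.exp (Complex.I * x * ξ)) :
    ∀ j : ℤ, L j = if j = 0 then 1 else 0 := by
  intro j
  have h2π : (0:ℝ) < 2 * π := Stmt2Aux.two_pi_pos
  set c : ℝ := (2 * π) ^ (-(1 : ℝ) / 2) with hcdef
  have hc0 : 0 < c := Real.rpow_pos_of_pos h2π _
  have hsum := Stmt2Aux.summable_shift hF0 hε hFdecay
  have hDm := Stmt2Aux.D_ge_m hF0 hFm hsum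
  have hDpos : ∀ ξ : ℝ, (0:ℝ) < ∑' n : ℤ, F (ξ + 2 * π * n) :=
    fun ξ => lt_of_lt_of_le hm (hDm ξ)
  have hLhat0 : ∀ ξ, 0 ≤ Lhat ξ := by
    intro ξ; rw [hLhat ξ]
    exact div_nonneg (mul_nonneg hc0.le (hF0 ξ)) (hDpos ξ).le
  have hLhatle : ∀ ξ, Lhat ξ ≤ c / m * F ξ := by
    intro ξ; rw [hLhat ξ, div_mul_eq_mul_div]
    gcongr
    · exact mul_nonneg hc0.le (hF0 ξ)
    · exact hDm ξ
  have hDmeas := Stmt2Aux.D_measurable hFcont hsum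
  have hLhatMeas : Measurable Lhat := by
    have hfun : Lhat = fun ξ => c * F ξ / ∑' n : ℤ, F (ξ + 2 * π * n) := funext hLhat
    rw [hfun]
    exact (measurable_const.mul hFcont.measurable).div hDmeas
  have hFint : Integrable F := Stmt2Aux.F_integrable hFcont hF0 hε hFdecay
  have hLhatInt : Integrable Lhat := by
    refine (hFint.const_mul (c / m)).mono' hLhatMeas.aestronglyMeasurable
      (ae_of_all _ fun ξ => ?_)
    rw [Real.norm_eq_abs, abs_of_nonneg (hLhat0 ξ)]
    exact hLhatle ξ
  -- the complex integrand
  set f : ℝ → ℂ := fun ξ => (Lhat ξ : ℂ) * Complex.exp (Complex.I * ((j:ℝ):ℂ) * (ξ:ℂ))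
    with hfdef
  have he1 : ∀ t : ℝ, ‖Complex.exp (Complex.I * ((j:ℝ):ℂ) * (t:ℂ))‖ = 1 := by
    intro t
    rw [show Complex.I * ((j:ℝ):ℂ) * (t:ℂ) = (((j:ℝ) * t : ℝ) : ℂ) * Complex.I by
      push_cast; ring]
    rw [Complex.norm_exp_ofReal_mul_I]
  have hfmeas : Measurable f :=
    (Complex.measurable_ofReal.comp hLhatMeas).mul
      ((Complex.continuous_exp.comp (continuous_const.mul Complex.continuous_ofReal)).measurable)
  have hfint : Integrable f := by
    refine hLhatInt.mono' hfmeas.aestronglyMeasurable (ae_of_all _ fun ξ => ?_)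
    rw [hfdef]
    simp only []
    rw [norm_mul, he1 ξ, mul_one, Complex.norm_real, Real.norm_eq_abs,
      abs_of_nonneg (hLhat0 ξ)]
  set g : ℝ → ℂ := fun x => f (2 * π * x) with hgdef
  have hgint : Integrable g := hfint.comp_mul_left' h2π.ne'
  have hsub : ∫ ξ : ℝ, f ξ = (2 * π) • ∫ x : ℝ, g x := by
    simp only [hgdef]
    rw [MeasureTheory.Measure.integral_comp_mul_left f (2 * π),
      abs_of_pos (inv_pos.2 h2π), smul_smul, mul_inv_cancel₀ h2π.ne', one_smul]
  have hHS := hgint.hasSum_intervalIntegral_comp_add_int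
  set e2 : ℝ → ℂ := fun x => Complex.exp (Complex.I * ((j:ℝ):ℂ) * ((2*π*x : ℝ):ℂ))
    with he2def
  set h : ℤ → ℝ → ℂ := fun n x => ((Lhat (2*π*x + 2*π*(n:ℝ)) : ℝ) : ℂ) * e2 x with hhdef
  have hgn : ∀ (n : ℤ) (x : ℝ), g (x + (n:ℝ)) = h n x := by
    intro n x
    simp only [hgdef, hhdef, he2def, hfdef]
    rw [show 2*π*(x + (n:ℝ)) = 2*π*x + 2*π*(n:ℝ) by ring]
    congr 1
    rw [show (Complex.I * ((j:ℝ):ℂ) * ((2*π*x + 2*π*(n:ℝ) : ℝ):ℂ))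
        = Complex.I * ((j:ℝ):ℂ) * ((2*π*x:ℝ):ℂ) + ((j*n : ℤ):ℂ) * (2*(π:ℂ)*Complex.I) by
      push_cast; ring]
    rw [Complex.exp_add, Complex.exp_int_mul_two_pi_mul_I, mul_one]
  have hterm : ∀ n : ℤ, (∫ x in (0:ℝ)..(1:ℝ), g (x + (n:ℝ))) = ∫ x in Ioc (0:ℝ) 1, h n x := by
    intro n
    rw [intervalIntegral.integral_of_le zero_le_one]
    exact MeasureTheory.setIntegral_congr_fun measurableSet_Ioc fun x _ => hgn n x
  have hhint : ∀ n : ℤ, IntegrableOn (h n) (Ioc (0:ℝ) 1) := by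
    intro n
    have h1 : Integrable fun x : ℝ => g (x + (n:ℝ)) := hgint.comp_add_right _
    exact (h1.congr (ae_of_all _ fun x => hgn n x)).integrableOn
  have hGint : Integrable (fun x : ℝ => Lhat (2 * π * x)) := hLhatInt.comp_mul_left' h2π.ne'
  have hHSnorm := hGint.hasSum_intervalIntegral_comp_add_int
  have hnormsum : Summable fun n : ℤ => ∫ x in Ioc (0:ℝ) 1, ‖h n x‖ := by
    refine hHSnorm.summable.congr fun n => ?_
    rw [intervalIntegral.integral_of_le zero_le_one]
    refine MeasureTheory.setIntegral_congr_fun measurableSet_Ioc fun x _ => ?_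
    simp only [hhdef]
    rw [norm_mul, he1 (2*π*x), mul_one, Complex.norm_real, Real.norm_eq_abs,
      abs_of_nonneg (hLhat0 _)]
    congr 1
    ring
  have hswap : ∑' n : ℤ, ∫ x in Ioc (0:ℝ) 1, h n x = ∫ x in Ioc (0:ℝ) 1, ∑' n : ℤ, h n x :=
    MeasureTheory.integral_tsum_of_summable_integral_norm hhint hnormsum
  have hLsum := Stmt2Aux.Lhat_sum hLhat hsum hDpos
  have hinner : ∀ x : ℝ, ∑' n : ℤ, h n x = (c : ℂ) * e2 x := by
    intro x
    simp only [hhdef]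
    rw [tsum_mul_right, ← Complex.ofReal_tsum, hLsum (2*π*x), mul_comm]
  have hdelta : (∫ x in Ioc (0:ℝ) 1, e2 x) = if j = 0 then (1:ℂ) else 0 := by
    rw [← intervalIntegral.integral_of_le zero_le_one]
    by_cases hj : j = 0
    · simp only [he2def, hj, Int.cast_zero, Complex.ofReal_zero, mul_zero, zero_mul,
        Complex.exp_zero, if_pos rfl]
      simp
    · have hc0' : (Complex.I * (((j:ℝ)):ℂ) * ((2*π:ℝ):ℂ)) ≠ 0 := by
        apply mul_ne_zero (mul_ne_zero Complex.I_ne_zero _)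
        · simp only [ne_eq, Complex.ofReal_eq_zero]
          positivity
        · simp only [ne_eq, Complex.ofReal_eq_zero, Int.cast_eq_zero]
          exact_mod_cast hj
      have harg : ∀ x : ℝ, Complex.I * ((j:ℝ):ℂ) * ((2*π*x : ℝ):ℂ)
          = (Complex.I * ((j:ℝ):ℂ) * ((2*π:ℝ):ℂ)) * (x:ℂ) := by
        intro x; push_cast; ring
      simp only [he2def, harg]
      rw [integral_exp_mul_complex hc0']
      rw [show (Complex.I * ((j:ℝ):ℂ) * ((2*π:ℝ):ℂ)) * ((1:ℝ):ℂ)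
          = ((j:ℤ):ℂ) * (2*(π:ℂ)*Complex.I) by push_cast; ring]
      rw [Complex.exp_int_mul_two_pi_mul_I]
      simp [hj]
  have hHS2 : HasSum (fun n : ℤ => ∫ x in Ioc (0:ℝ) 1, h n x) (∫ x : ℝ, g x) := by
    have := funext hterm
    rw [← this]
    exact hHS
  have key : ∫ x : ℝ, g x = (c:ℂ) * (if j = 0 then 1 else 0) := by
    rw [← hHS2.tsum_eq, hswap]
    simp only [hinner]
    rw [MeasureTheory.integral_const_mul, hdelta]
  have hfin : L (j:ℝ) = (c:ℂ) * (((2*π : ℝ)) • ((c:ℂ) * (if j = 0 then 1 else 0))) := by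
    rw [hL (j:ℝ)]
    rw [show (∫ ξ : ℝ, (Lhat ξ : ℂ) * Complex.exp (Complex.I * (((j:ℤ):ℝ):ℂ) * (ξ:ℂ)))
        = ∫ ξ : ℝ, f ξ from rfl]
    rw [hsub, key]
  have hcc : c * c * (2 * π) = 1 := by
    rw [hcdef, ← Real.rpow_add h2π, show -(1:ℝ)/2 + -(1:ℝ)/2 = -1 by norm_num,
      Real.rpow_neg_one]
    field_simp
  rw [hfin, Complex.real_smul]
  have hccC : (c:ℂ) * (((2*π:ℝ)):ℂ) * (c:ℂ) = 1 := by
    rw [← Complex.ofReal_mul, ← Complex.ofReal_mul,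
      show c * (2*π) * c = c * c * (2*π) by ring, hcc, Complex.ofReal_one]
  calc (c:ℂ) * ((((2*π:ℝ)):ℂ) * ((c:ℂ) * (if j = 0 then (1:ℂ) else 0)))
      = ((c:ℂ) * (((2*π:ℝ)):ℂ) * (c:ℂ)) * (if j = 0 then (1:ℂ) else 0) := by ring
    _ = if j = 0 then (1:ℂ) else 0 := by rw [hccC, one_mul]
end

section
/- Let K_a(u) = ∫_0^∞ exp(−u cosh t) cosh(at) dt denote the Macdonald function (modified Bessel function of the second kind). For |a| ≥ 1/2 and u > 0 one has (π/2)^{1/2} u^{-1/2} e^{-u} ≤ K_a(u) ≤ (2π)^{1/2} u^{-1/2} e^{-u} e^{a²/(2u)}. -/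
open Real MeasureTheory Set

/-- The Macdonald function (modified Bessel function of the second kind),
`K_a(u) = ∫_0^∞ exp(-u cosh t) cosh(a t) dt` for `u > 0`. -/
noncomputable def macdonaldK (a u : ℝ) : ℝ :=
  ∫ t in Set.Ioi (0 : ℝ), Real.exp (-u * Real.cosh t) * Real.cosh (a * t)

lemma cosh_le_exp_abs (x : ℝ) : Real.cosh x ≤ Real.exp |x| := by
  rw [Real.cosh_eq]
  have h1 : Real.exp x ≤ Real.exp |x| := Real.exp_le_exp.2 (le_abs_self x)
  have h2 : Real.exp (-x) ≤ Real.exp |x| := Real.exp_le_exp.2 (neg_le_abs x)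
  linarith

lemma arsinh_le_self' {s : ℝ} (hs : 0 ≤ s) : Real.arsinh s ≤ s := by
  calc Real.arsinh s ≤ Real.arsinh (Real.sinh s) :=
        Real.arsinh_le_arsinh.2 (Real.self_le_sinh_iff.2 hs)
    _ = s := Real.arsinh_sinh s

lemma macdonaldK_eq (a u : ℝ) :
    macdonaldK a u = ∫ s in Set.Ioi (0:ℝ),
      (2 / Real.sqrt (1 + s ^ 2)) *
        (Real.exp (-u * (1 + 2 * s ^ 2)) * Real.cosh (2 * a * Real.arsinh s)) := by
  have himg : (fun s : ℝ => 2 * Real.arsinh s) '' Set.Ioi 0 = Set.Ioi 0 := by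
    ext x
    simp only [Set.mem_image, Set.mem_Ioi]
    constructor
    · rintro ⟨s, hs, rfl⟩
      have := Real.arsinh_pos_iff.2 hs
      linarith
    · intro hx
      refine ⟨Real.sinh (x / 2), Real.sinh_pos_iff.2 (by linarith), ?_⟩
      rw [Real.arsinh_sinh]; ring
  have hinj : Set.InjOn (fun s : ℝ => 2 * Real.arsinh s) (Set.Ioi 0) := by
    intro x _ y _ h
    simp only at h
    exact Real.arsinh_injective (by linarith)
  have hderiv : ∀ x ∈ Set.Ioi (0:ℝ), HasDerivWithinAt (fun s : ℝ => 2 * Real.arsinh s)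
      (2 * (Real.sqrt (1 + x ^ 2))⁻¹) (Set.Ioi 0) x :=
    fun x _ => ((Real.hasDerivAt_arsinh x).const_mul 2).hasDerivWithinAt
  rw [macdonaldK]
  nth_rewrite 1 [← himg]
  rw [
    integral_image_eq_integral_abs_deriv_smul measurableSet_Ioi hderiv hinj]
  refine setIntegral_congr_fun measurableSet_Ioi fun s _ => ?_
  have hsq : (0:ℝ) < Real.sqrt (1 + s ^ 2) := Real.sqrt_pos.2 (by positivity)
  have hcosh : Real.cosh (2 * Real.arsinh s) = 1 + 2 * s ^ 2 := by
    rw [Real.cosh_two_mul, Real.cosh_arsinh, Real.sinh_arsinh, Real.sq_sqrt (by positivity : (0:ℝ) ≤ 1 + s ^ 2)]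
    ring
  rw [smul_eq_mul, abs_of_pos (by positivity : (0:ℝ) < 2 * (Real.sqrt (1 + s ^ 2))⁻¹)]
  rw [show a * (2 * Real.arsinh s) = 2 * a * Real.arsinh s by ring, hcosh]
  field_simp


/-- For `|a| ≥ 1/2` and `u > 0`:
`(π/2)^{1/2} u^{-1/2} e^{-u} ≤ K_a(u) ≤ (2π)^{1/2} u^{-1/2} e^{-u} e^{a²/(2u)}`. -/
theorem stmt11 (a u : ℝ) (ha : 1 / 2 ≤ |a|) (hu : 0 < u) :
    (π / 2) ^ ((1 : ℝ) / 2) * u ^ (-(1 : ℝ) / 2) * Real.exp (-u) ≤ macdonaldK a u ∧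
    macdonaldK a u ≤
      (2 * π) ^ ((1 : ℝ) / 2) * u ^ (-(1 : ℝ) / 2) * Real.exp (-u) *
        Real.exp (a ^ 2 / (2 * u)) := by
  have hb : (0:ℝ) < 2 * u := by linarith
  set c : ℝ := |a| / (2 * u) with hc
  obtain ⟨F, hF⟩ : ∃ F : ℝ → ℝ, F = fun s =>
      (2 / Real.sqrt (1 + s ^ 2)) *
        (Real.exp (-u * (1 + 2 * s ^ 2)) * Real.cosh (2 * a * Real.arsinh s)) := ⟨_, rfl⟩
  obtain ⟨H, hH⟩ : ∃ H : ℝ → ℝ, H = fun s =>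
      2 * Real.exp (-u) * Real.exp (a ^ 2 / (2 * u)) * Real.exp (-(2 * u) * (s - c) ^ 2) :=
    ⟨_, rfl⟩
  have hKF : macdonaldK a u = ∫ s in Set.Ioi (0:ℝ), F s := by
    simp only [hF]; exact macdonaldK_eq a u
  have hsqrt_pos : ∀ s : ℝ, (0:ℝ) < Real.sqrt (1 + s ^ 2) :=
    fun s => Real.sqrt_pos.2 (by positivity)
  have hF0 : ∀ s : ℝ, 0 ≤ F s := by
    intro s
    have := hsqrt_pos s
    simp only [hF]
    positivity
  -- pointwise upper bound
  have hFH : ∀ s : ℝ, 0 ≤ s → F s ≤ H s := by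
    intro s hs
    have hsq1 : (1:ℝ) ≤ Real.sqrt (1 + s ^ 2) := by
      have := Real.sqrt_le_sqrt (show (1:ℝ) ≤ 1 + s ^ 2 by nlinarith)
      simpa using this
    have h1 : 2 / Real.sqrt (1 + s ^ 2) ≤ 2 := by
      rw [div_le_iff₀ (by linarith)]; nlinarith
    have harsinh0 : 0 ≤ Real.arsinh s := Real.arsinh_nonneg_iff.2 hs
    have h2 : Real.cosh (2 * a * Real.arsinh s) ≤ Real.exp (2 * |a| * s) := by
      refine (cosh_le_exp_abs _).trans (Real.exp_le_exp.2 ?_)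
      have habs : |2 * a * Real.arsinh s| = 2 * |a| * Real.arsinh s := by
        rw [abs_mul, abs_mul, abs_of_nonneg harsinh0, abs_two]
      rw [habs]
      have := arsinh_le_self' hs
      nlinarith [abs_nonneg a]
    have hexp : Real.exp (-u * (1 + 2 * s ^ 2)) * Real.exp (2 * |a| * s)
        = Real.exp (-u) * Real.exp (a ^ 2 / (2 * u)) * Real.exp (-(2 * u) * (s - c) ^ 2) := by
      rw [← Real.exp_add, ← Real.exp_add, ← Real.exp_add]
      congr 1
      rw [hc]
      have h2u : (2 * u) ≠ 0 := ne_of_gt hb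
      field_simp
      nlinarith [sq_abs a]
    calc F s ≤ 2 * (Real.exp (-u * (1 + 2 * s ^ 2)) * Real.exp (2 * |a| * s)) := by
          simp only [hF]
          have e1 : (0:ℝ) ≤ Real.exp (-u * (1 + 2 * s ^ 2)) := Real.exp_nonneg _
          have e2 : (0:ℝ) ≤ 2 / Real.sqrt (1 + s ^ 2) := by positivity
          have e3 : (0:ℝ) ≤ Real.cosh (2 * a * Real.arsinh s) := (Real.cosh_pos _).le
          have := mul_le_mul h1 (mul_le_mul_of_nonneg_left h2 e1) (by positivity) (by norm_num)
          exact this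
      _ = H s := by simp only [hH]; rw [hexp]; ring
  -- continuity and integrability of F
  have hF_cont : Continuous F := by
    rw [hF]
    refine (continuous_const.div (Real.continuous_sqrt.comp (by continuity))
        (fun s => (hsqrt_pos s).ne')).mul
      ((Real.continuous_exp.comp (by continuity)).mul
        (Real.continuous_cosh.comp (continuous_const.mul Real.continuous_arsinh)))
  have hH_int : Integrable H := by
    rw [hH]
    exact (((integrable_exp_neg_mul_sq hb).comp_sub_right c).const_mul _)
  have hF_int : IntegrableOn F (Set.Ioi 0) := by
    refine (hH_int.integrableOn).mono' hF_cont.aestronglyMeasurable ?_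
    refine (ae_restrict_iff' measurableSet_Ioi).2 (ae_of_all _ fun s hs => ?_)
    rw [Real.norm_eq_abs, abs_of_nonneg (hF0 s)]
    exact hFH s (le_of_lt hs)
  -- Gaussian integrals
  have hgauss : ∫ s : ℝ, Real.exp (-(2 * u) * (s - c) ^ 2) = Real.sqrt (π / (2 * u)) := by
    rw [show (fun s : ℝ => Real.exp (-(2 * u) * (s - c) ^ 2))
        = fun s : ℝ => (fun x : ℝ => Real.exp (-(2 * u) * x ^ 2)) (s - c) from rfl]
    rw [integral_sub_right_eq_self (fun x : ℝ => Real.exp (-(2 * u) * x ^ 2)) c]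
    exact integral_gaussian (2 * u)
  have hHint_val : ∫ s : ℝ, H s
      = 2 * Real.exp (-u) * Real.exp (a ^ 2 / (2 * u)) * Real.sqrt (π / (2 * u)) := by
    rw [hH]
    rw [integral_const_mul, hgauss]
  -- constant identities
  have hval : Real.sqrt (π / (2 * u)) = (π / 2) ^ ((1:ℝ) / 2) * u ^ (-(1:ℝ) / 2) := by
    rw [show (-(1:ℝ)) / 2 = -(1 / 2) by ring, Real.rpow_neg hu.le,
      ← Real.sqrt_eq_rpow, ← Real.sqrt_eq_rpow, ← Real.sqrt_inv,
      ← Real.sqrt_mul (by positivity : (0:ℝ) ≤ π / 2)]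
    congr 1
    field_simp
  -- upper bound
  have hupper : macdonaldK a u ≤
      (2 * π) ^ ((1:ℝ) / 2) * u ^ (-(1:ℝ) / 2) * Real.exp (-u) *
        Real.exp (a ^ 2 / (2 * u)) := by
    have step1 : ∫ s in Set.Ioi (0:ℝ), F s ≤ ∫ s in Set.Ioi (0:ℝ), H s := by
      refine integral_mono_of_nonneg (ae_of_all _ hF0) hH_int.integrableOn ?_
      exact (ae_restrict_iff' measurableSet_Ioi).2 (ae_of_all _ fun s hs => hFH s (le_of_lt hs))
    have step2 : ∫ s in Set.Ioi (0:ℝ), H s ≤ ∫ s : ℝ, H s := by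
      refine setIntegral_le_integral hH_int (ae_of_all _ fun s => ?_)
      simp only [hH]; positivity
    have hval2 : 2 * Real.sqrt (π / (2 * u)) = (2 * π) ^ ((1:ℝ) / 2) * u ^ (-(1:ℝ) / 2) := by
      rw [show (-(1:ℝ)) / 2 = -(1 / 2) by ring, Real.rpow_neg hu.le,
        ← Real.sqrt_eq_rpow, ← Real.sqrt_eq_rpow, ← Real.sqrt_inv,
        ← Real.sqrt_mul (by positivity : (0:ℝ) ≤ 2 * π)]
      rw [show (2 * π) * u⁻¹ = 2 ^ 2 * (π / (2 * u)) by field_simp,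
        Real.sqrt_mul (by positivity) , Real.sqrt_sq (by norm_num : (0:ℝ) ≤ 2)]
    calc macdonaldK a u ≤ ∫ s : ℝ, H s := by rw [hKF]; exact step1.trans step2
      _ = 2 * Real.exp (-u) * Real.exp (a ^ 2 / (2 * u)) * Real.sqrt (π / (2 * u)) := hHint_val
      _ = (2 * π) ^ ((1:ℝ) / 2) * u ^ (-(1:ℝ) / 2) * Real.exp (-u) *
            Real.exp (a ^ 2 / (2 * u)) := by rw [← hval2]; ring
  -- lower bound
  have hlower : (π / 2) ^ ((1:ℝ) / 2) * u ^ (-(1:ℝ) / 2) * Real.exp (-u) ≤ macdonaldK a u := by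
    obtain ⟨L, hL⟩ : ∃ L : ℝ → ℝ,
        L = fun s => 2 * Real.exp (-u) * Real.exp (-(2 * u) * s ^ 2) := ⟨_, rfl⟩
    have hLF : ∀ s ∈ Set.Ioi (0:ℝ), L s ≤ F s := by
      intro s hs
      have hs0 : (0:ℝ) ≤ s := le_of_lt hs
      have harsinh0 : 0 ≤ Real.arsinh s := Real.arsinh_nonneg_iff.2 hs0
      have hcosh_ge : Real.sqrt (1 + s ^ 2) ≤ Real.cosh (2 * a * Real.arsinh s) := by
        rw [← Real.cosh_arsinh]
        apply Real.cosh_le_cosh.2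
        rw [abs_mul, abs_mul, abs_two, abs_of_nonneg harsinh0]
        nlinarith
      have hne := (hsqrt_pos s).ne'
      have key : L s = (2 / Real.sqrt (1 + s ^ 2)) *
          (Real.exp (-u * (1 + 2 * s ^ 2)) * Real.sqrt (1 + s ^ 2)) := by
        simp only [hL]
        have : Real.exp (-u * (1 + 2 * s ^ 2)) = Real.exp (-u) * Real.exp (-(2 * u) * s ^ 2) := by
          rw [← Real.exp_add]; congr 1; ring
        rw [this]
        field_simp
      rw [key]; simp only [hF]
      have e2 : (0:ℝ) ≤ 2 / Real.sqrt (1 + s ^ 2) := by positivity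
      exact mul_le_mul_of_nonneg_left
        (mul_le_mul_of_nonneg_left hcosh_ge (Real.exp_nonneg _)) e2
    have hL_int : IntegrableOn L (Set.Ioi 0) := by
      rw [hL]
      exact ((integrable_exp_neg_mul_sq hb).const_mul _).integrableOn
    have step1 : ∫ s in Set.Ioi (0:ℝ), L s ≤ ∫ s in Set.Ioi (0:ℝ), F s := by
      refine integral_mono_of_nonneg (ae_of_all _ fun s => ?_) hF_int ?_
      · simp only [hL]; positivity
      · exact (ae_restrict_iff' measurableSet_Ioi).2 (ae_of_all _ hLF)
    have hLval : ∫ s in Set.Ioi (0:ℝ), L s = Real.exp (-u) * Real.sqrt (π / (2 * u)) := by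
      simp only [hL]
      rw [integral_const_mul, integral_gaussian_Ioi]
      ring
    rw [hKF]
    calc (π / 2) ^ ((1:ℝ) / 2) * u ^ (-(1:ℝ) / 2) * Real.exp (-u)
        = Real.exp (-u) * Real.sqrt (π / (2 * u)) := by rw [hval]; ring
      _ = ∫ s in Set.Ioi (0:ℝ), L s := hLval.symm
      _ ≤ ∫ s in Set.Ioi (0:ℝ), F s := step1
  exact ⟨hlower, hupper⟩
end

section
/- For fixed c > 0 and k ∈ ℕ, k > 1, let φ̂_k(ξ) = |ξ|^{-k} K_k(c|ξ|) be the Fourier transform (up to a constant) of the multiquadric (x²+c²)^{k−1/2}. Then for j ≠ 0 and 0 < |ξ| ≤ π, φ̂_k(ξ+2πj)/φ̂_k(ξ) ≤ (2|j|−1)^{-k}. -/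
open Real Set MeasureTheory

lemma macK_integrableOn {a u : ℝ} (ha : 0 ≤ a) (hu : 0 < u) :
    IntegrableOn (fun t => Real.exp (-u * Real.cosh t) * Real.cosh (a * t)) (Ioi 0) := by
  have hcont : Continuous fun t => Real.exp (-u * Real.cosh t) * Real.cosh (a * t) := by
    continuity
  refine Integrable.mono' ((exp_neg_integrableOn_Ioi 0 (one_pos)).const_mul
      (Real.exp (2 * (a + 1) ^ 2 / u))) hcont.aestronglyMeasurable ?_
  filter_upwards [ae_restrict_mem measurableSet_Ioi] with t (ht : 0 < t)
  have h1 : Real.cosh (a * t) ≤ Real.exp (a * t) := by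
    rw [Real.cosh_eq]
    have : Real.exp (-(a * t)) ≤ Real.exp (a * t) := by
      apply Real.exp_le_exp.2; nlinarith [mul_nonneg ha ht.le]
    linarith
  have h2 : Real.exp (-u * Real.cosh t) * Real.cosh (a * t)
      ≤ Real.exp (a * t - u * Real.cosh t) := by
    calc Real.exp (-u * Real.cosh t) * Real.cosh (a * t)
        ≤ Real.exp (-u * Real.cosh t) * Real.exp (a * t) :=
          mul_le_mul_of_nonneg_left h1 (Real.exp_pos _).le
      _ = Real.exp (a * t - u * Real.cosh t) := by rw [← Real.exp_add]; ring_nf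
  have h3 : a * t - u * Real.cosh t ≤ 2 * (a + 1) ^ 2 / u + -1 * t := by
    have hch : t ^ 2 / 8 ≤ Real.cosh t := by
      have he : 1 + t / 2 ≤ Real.exp (t / 2) := by linarith [Real.add_one_le_exp (t / 2)]
      have he2 : (1 + t / 2) ^ 2 ≤ Real.exp t := by
        have := mul_le_mul he he (by linarith) (Real.exp_pos _).le
        rw [← Real.exp_add] at this
        calc (1 + t / 2) ^ 2 = (1 + t / 2) * (1 + t / 2) := sq (1 + t/2) ▸ by ring
          _ ≤ Real.exp (t / 2 + t / 2) := this
          _ = Real.exp t := by ring_nf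
      rw [Real.cosh_eq]
      nlinarith [Real.exp_pos (-t), ht.le]
    rw [div_add' _ _ _ hu.ne', le_div_iff₀ hu]
    nlinarith [sq_nonneg (u * t - 4 * (a + 1)), mul_le_mul_of_nonneg_left hch
      (mul_pos hu hu).le]
  have hpos : 0 < Real.exp (-u * Real.cosh t) * Real.cosh (a * t) :=
    mul_pos (Real.exp_pos _) (Real.cosh_pos _)
  rw [Real.norm_eq_abs, abs_of_pos hpos, ← Real.exp_add]
  exact h2.trans (Real.exp_le_exp.2 h3)

lemma macK_pos {a u : ℝ} (ha : 0 ≤ a) (hu : 0 < u) : 0 < macdonaldK a u := by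
  rw [macdonaldK]
  rw [setIntegral_pos_iff_support_of_nonneg_ae ?_ (macK_integrableOn ha hu)]
  · have hsub : Ioi (0 : ℝ) ⊆ Function.support
        (fun t => Real.exp (-u * Real.cosh t) * Real.cosh (a * t)) ∩ Ioi 0 := by
      intro t ht
      exact ⟨(mul_pos (Real.exp_pos _) (Real.cosh_pos _)).ne', ht⟩
    calc (0 : ENNReal) < volume (Ioi (0:ℝ)) := by simp
      _ ≤ _ := measure_mono hsub
  · filter_upwards with t
    exact (mul_pos (Real.exp_pos _) (Real.cosh_pos _)).le

lemma macK_anti {a u v : ℝ} (ha : 0 ≤ a) (hu : 0 < u) (huv : u ≤ v) :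
    macdonaldK a v ≤ macdonaldK a u := by
  have hv : 0 < v := hu.trans_le huv
  refine setIntegral_mono_on (macK_integrableOn ha hv) (macK_integrableOn ha hu)
    measurableSet_Ioi ?_
  intro t ht
  have hch : 0 < Real.cosh t := Real.cosh_pos t
  have : Real.exp (-v * Real.cosh t) ≤ Real.exp (-u * Real.cosh t) := by
    apply Real.exp_le_exp.2; nlinarith
  exact mul_le_mul_of_nonneg_right this (Real.cosh_pos _).le

/-- For the multiquadric multiplier `φ̂_k(ξ) = |ξ|^{-k} K_k(c|ξ|)` with `c > 0`, `k > 1`: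
for `j ≠ 0` and `0 < |ξ| ≤ π`, `φ̂_k(ξ+2πj)/φ̂_k(ξ) ≤ (2|j| - 1)^{-k}`. -/
theorem stmt12 (c : ℝ) (hc : 0 < c) (k : ℕ) (hk : 1 < k)
    (j : ℤ) (hj : j ≠ 0) (ξ : ℝ) (hξ0 : 0 < |ξ|) (hξ : |ξ| ≤ π) :
    (|ξ + 2 * π * j| ^ (-(k : ℝ)) * macdonaldK k (c * |ξ + 2 * π * j|)) /
        (|ξ| ^ (-(k : ℝ)) * macdonaldK k (c * |ξ|)) ≤
      (2 * |(j : ℝ)| - 1) ^ (-(k : ℝ)) := by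
  set A := |ξ + 2 * π * j| with hA
  set B := |ξ| with hB
  set m := 2 * |(j : ℝ)| - 1 with hm
  have hk0 : (0 : ℝ) ≤ (k : ℝ) := Nat.cast_nonneg k
  have hj1 : (1 : ℝ) ≤ |(j : ℝ)| := by
    have : (1 : ℤ) ≤ |j| := Int.one_le_abs (by exact_mod_cast hj)
    calc (1:ℝ) = ((1:ℤ) : ℝ) := by norm_num
      _ ≤ (|j| : ℝ) := by exact_mod_cast this
      _ = |(j : ℝ)| := by push_cast; ring
  have hm1 : (1 : ℝ) ≤ m := by rw [hm]; linarith
  have hm0 : (0 : ℝ) < m := lt_of_lt_of_le one_pos hm1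
  have hmBA : m * B ≤ A := by
    have h2pij : |2 * π * j| = 2 * π * |(j:ℝ)| := by
      rw [abs_mul, abs_of_pos (by positivity : (0:ℝ) < 2 * π)]
    have htri : |2 * π * j| ≤ A + B := by
      calc |2 * π * (j:ℝ)| = |(ξ + 2 * π * j) - ξ| := by ring_nf
        _ ≤ |ξ + 2 * π * j| + |ξ| := abs_sub _ _
    rw [h2pij] at htri
    nlinarith
  have hBA : B ≤ A := le_trans (le_mul_of_one_le_left hξ0.le hm1) hmBA
  have hA0 : 0 < A := lt_of_lt_of_le hξ0 hBA
  have hKle : macdonaldK k (c * A) ≤ macdonaldK k (c * B) :=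
    macK_anti hk0 (mul_pos hc hξ0) (by nlinarith)
  have hK0 : 0 < macdonaldK k (c * B) := macK_pos hk0 (mul_pos hc hξ0)
  have hrpow : A ^ (-(k:ℝ)) ≤ m ^ (-(k:ℝ)) * B ^ (-(k:ℝ)) := by
    rw [← Real.mul_rpow hm0.le hξ0.le]
    exact Real.rpow_le_rpow_of_nonpos (mul_pos hm0 hξ0) hmBA (neg_nonpos.2 hk0)
  have hD : 0 < B ^ (-(k:ℝ)) * macdonaldK k (c * B) :=
    mul_pos (Real.rpow_pos_of_pos hξ0 _) hK0
  rw [div_le_iff₀ hD]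
  have hKA0 : 0 ≤ macdonaldK k (c * A) := (macK_pos hk0 (mul_pos hc hA0)).le
  calc A ^ (-(k:ℝ)) * macdonaldK k (c * A)
      ≤ (m ^ (-(k:ℝ)) * B ^ (-(k:ℝ))) * macdonaldK k (c * B) :=
        mul_le_mul hrpow hKle hKA0 (by positivity)
    _ = m ^ (-(k:ℝ)) * (B ^ (-(k:ℝ)) * macdonaldK k (c * B)) := by ring
end

section
/- Fix a real a with |a+1/2| ≥ 1/2, and for c ≥ 1 let φ̂_c(ξ) = |ξ|^{-(a+1/2)} K_{a+1/2}(c|ξ|). Then for every j ≠ 0 and 0 < |ξ| ≤ π, φ̂_c(ξ+2πj)/φ̂_c(ξ) ≤ 3 (2|j|+1)^{|a|+1/2} exp(−2π(|j|−1)), uniformly in c ≥ 1, and for fixed j ≠ 0 and 0 < |ξ| < π this ratio tends to 0 as c → ∞. -/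
open Real Filter Topology

section Aux

open MeasureTheory Set

lemma cosh_ge_sq (t : ℝ) : t^2/8 ≤ Real.cosh t := by
  rw [Real.cosh_eq]
  have h1 := Real.add_one_le_exp (t/2)
  have h2 := Real.add_one_le_exp (-(t/2))
  have e1 : Real.exp t = (Real.exp (t/2))^2 := by
    rw [← Real.exp_nat_mul]; norm_num; ring
  have e2 : Real.exp (-t) = (Real.exp (-(t/2)))^2 := by
    rw [← Real.exp_nat_mul]; norm_num; ring
  have p1 := Real.exp_pos (t/2)
  have p2 := Real.exp_pos (-(t/2))
  rcases le_total 0 t with ht | ht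
  · have h3 : (1+t/2)^2 ≤ (Real.exp (t/2))^2 := by nlinarith
    nlinarith [sq_nonneg (Real.exp (-(t/2)))]
  · have h3 : (1-t/2)^2 ≤ (Real.exp (-(t/2)))^2 := by nlinarith
    nlinarith [sq_nonneg (Real.exp (t/2))]

lemma integrandR_integrable (ν : ℝ) {u : ℝ} (hu : 0 < u) :
    Integrable (fun t : ℝ => Real.exp (-u * Real.cosh t) * Real.exp (ν * t)) := by
  have hb : (0:ℝ) < u/16 := by positivity
  refine ((integrable_exp_neg_mul_sq hb).const_mul (Real.exp (4*ν^2/u))).mono' ?_ ?_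
  · exact (((Real.continuous_exp.comp ((continuous_const.mul Real.continuous_cosh))).mul
      (Real.continuous_exp.comp (continuous_const.mul continuous_id)))).aestronglyMeasurable
  · filter_upwards with t
    have hpos : (0:ℝ) < Real.exp (-u * Real.cosh t) * Real.exp (ν * t) := by positivity
    rw [Real.norm_eq_abs, abs_of_pos hpos, ← Real.exp_add, ← Real.exp_add]
    apply Real.exp_le_exp.mpr
    have hc := mul_le_mul_of_nonneg_left (cosh_ge_sq t) hu.le
    have hinv : u * (4*ν^2/u) = 4*ν^2 := by field_simp
    nlinarith [sq_nonneg (u*t - 8*ν), hu, sq_nonneg t, mul_pos hu hu]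

lemma integrandC_integrable (ν : ℝ) {u : ℝ} (hu : 0 < u) :
    Integrable (fun t : ℝ => Real.exp (-u * Real.cosh t) * Real.cosh (ν * t)) := by
  have h := ((integrandR_integrable ν hu).add (integrandR_integrable (-ν) hu)).div_const 2
  have e : (fun t : ℝ => Real.exp (-u * Real.cosh t) * Real.cosh (ν * t))
      = fun t => (Real.exp (-u * Real.cosh t) * Real.exp (ν * t)
        + Real.exp (-u * Real.cosh t) * Real.exp (-ν * t)) / 2 := by
    funext t; simp only [Real.cosh_eq]; ring
  rw [e]; exact h

lemma reprR (ν : ℝ) {u : ℝ} (hu : 0 < u) :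
    macdonaldK ν u = (1/2) * ∫ t : ℝ, Real.exp (-u * Real.cosh t) * Real.exp (ν * t) := by
  have habs : (∫ t : ℝ, Real.exp (-u * Real.cosh t) * Real.cosh (ν * t)) = 2 * macdonaldK ν u := by
    rw [macdonaldK, ← _root_.integral_comp_abs
      (f := fun t => Real.exp (-u * Real.cosh t) * Real.cosh (ν * t))]
    congr 1; funext t
    rcases abs_cases t with ⟨h, _⟩ | ⟨h, _⟩ <;> rw [h] <;>
      simp [Real.cosh_neg, mul_neg]
  have hneg : (∫ t : ℝ, Real.exp (-u * Real.cosh t) * Real.exp (-ν * t))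
      = ∫ t : ℝ, Real.exp (-u * Real.cosh t) * Real.exp (ν * t) := by
    have h := MeasureTheory.integral_neg_eq_self
      (fun t => Real.exp (-u * Real.cosh t) * Real.exp (-ν * t)) volume
    simp only [Real.cosh_neg, neg_mul_neg, neg_neg] at h
    exact h.symm
  have hsum : (∫ t : ℝ, Real.exp (-u * Real.cosh t) * Real.cosh (ν * t))
      = (1/2) * ((∫ t : ℝ, Real.exp (-u * Real.cosh t) * Real.exp (ν * t))
        + ∫ t : ℝ, Real.exp (-u * Real.cosh t) * Real.exp (-ν * t)) := by
    rw [← integral_add (integrandR_integrable ν hu) (integrandR_integrable (-ν) hu)]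
    rw [← MeasureTheory.integral_const_mul]
    congr 1; funext t; simp only [Real.cosh_eq]; ring
  rw [habs] at hsum
  rw [hneg] at hsum
  linarith

lemma shift_eq (ν : ℝ) {u : ℝ} (hu : 0 < u) (t : ℝ) :
    u ^ (-ν) * (Real.exp (-u * Real.cosh t) * Real.exp (ν * t))
      = Real.exp (-(u^2 * Real.exp (t - Real.log u) + Real.exp (-(t - Real.log u)))/2)
          * Real.exp (ν * (t - Real.log u)) := by
  have h1 : Real.exp (t - Real.log u) = Real.exp t / u := by
    rw [Real.exp_sub, Real.exp_log hu]
  have h2 : Real.exp (-(t - Real.log u)) = u * Real.exp (-t) := by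
    have : -(t - Real.log u) = Real.log u + (-t) := by ring
    rw [this, Real.exp_add, Real.exp_log hu]
  rw [h1, h2, Real.rpow_def_of_pos hu, Real.cosh_eq]
  simp only [← Real.exp_add]
  congr 1
  field_simp
  ring

lemma integrandW_integrable (ν : ℝ) {u : ℝ} (hu : 0 < u) :
    Integrable (fun s : ℝ =>
      Real.exp (-(u^2 * Real.exp s + Real.exp (-s))/2) * Real.exp (ν * s)) := by
  have h := ((integrandR_integrable ν hu).const_mul (u ^ (-ν))).comp_add_right (Real.log u)
  have e : (fun s : ℝ =>
      Real.exp (-(u^2 * Real.exp s + Real.exp (-s))/2) * Real.exp (ν * s))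
      = fun s => u ^ (-ν) * (Real.exp (-u * Real.cosh (s + Real.log u))
          * Real.exp (ν * (s + Real.log u))) := by
    funext s
    rw [shift_eq ν hu (s + Real.log u), add_sub_cancel_right]
  rw [e]; exact h

lemma reprW (ν : ℝ) {u : ℝ} (hu : 0 < u) :
    u ^ (-ν) * macdonaldK ν u
      = (1/2) * ∫ s : ℝ, Real.exp (-(u^2 * Real.exp s + Real.exp (-s))/2) * Real.exp (ν * s) := by
  rw [reprR ν hu]
  have h := MeasureTheory.integral_add_right_eq_self (μ := volume)
    (fun s : ℝ => Real.exp (-(u^2 * Real.exp s + Real.exp (-s))/2) * Real.exp (ν * s))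
    (-(Real.log u))
  rw [← h]
  rw [show u ^ (-ν) * ((1:ℝ)/2 * ∫ t : ℝ, Real.exp (-u * Real.cosh t) * Real.exp (ν * t))
      = (1/2) * ∫ t : ℝ, u ^ (-ν) * (Real.exp (-u * Real.cosh t) * Real.exp (ν * t)) by
    rw [MeasureTheory.integral_const_mul]; ring]
  congr 1
  congr 1
  funext t
  rw [shift_eq ν hu t]
  ring_nf

lemma K_nonneg (ν u : ℝ) : 0 ≤ macdonaldK ν u :=
  setIntegral_nonneg measurableSet_Ioi fun t _ => by positivity

lemma K_pos (ν : ℝ) {u : ℝ} (hu : 0 < u) : 0 < macdonaldK ν u := by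
  rw [macdonaldK]
  rw [setIntegral_pos_iff_support_of_nonneg_ae
    (Filter.Eventually.of_forall fun t => by positivity)
    (integrandC_integrable ν hu).integrableOn]
  have hsupp : Set.Ioi (0:ℝ) ⊆ Function.support
      (fun t => Real.exp (-u * Real.cosh t) * Real.cosh (ν * t)) := by
    intro t _
    exact ne_of_gt (by positivity)
  have : (Function.support (fun t => Real.exp (-u * Real.cosh t) * Real.cosh (ν * t))
      ∩ Set.Ioi 0) = Set.Ioi (0:ℝ) := by
    apply Set.inter_eq_self_of_subset_right hsupp
  rw [this, Real.volume_Ioi]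
  exact ENNReal.zero_lt_top

lemma K_decay (ν : ℝ) {u v : ℝ} (hu : 0 < u) (huv : u ≤ v) :
    macdonaldK ν v ≤ Real.exp (u - v) * macdonaldK ν u := by
  have hv : 0 < v := lt_of_lt_of_le hu huv
  rw [macdonaldK, macdonaldK, ← MeasureTheory.integral_const_mul]
  refine setIntegral_mono_on (integrandC_integrable ν hv).integrableOn
    (((integrandC_integrable ν hu).const_mul _).integrableOn) measurableSet_Ioi ?_
  intro t _
  rw [← mul_assoc, ← Real.exp_add]
  have hcosh := Real.one_le_cosh t
  have harg : -v * Real.cosh t ≤ u - v + -u * Real.cosh t := by nlinarith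
  exact mul_le_mul_of_nonneg_right (Real.exp_le_exp.mpr harg) (Real.cosh_pos (ν * t)).le

lemma W_antitone (ν : ℝ) {u v : ℝ} (hu : 0 < u) (huv : u ≤ v) :
    v ^ (-ν) * macdonaldK ν v ≤ u ^ (-ν) * macdonaldK ν u := by
  have hv : 0 < v := lt_of_lt_of_le hu huv
  rw [reprW ν hu, reprW ν hv]
  have := integral_mono (integrandW_integrable ν hv) (integrandW_integrable ν hu)
    (fun s => by
      have hsq : u^2 ≤ v^2 := by nlinarith
      have h1 : u^2 * Real.exp s ≤ v^2 * Real.exp s :=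
        mul_le_mul_of_nonneg_right hsq (Real.exp_pos s).le
      have : Real.exp (-(v^2 * Real.exp s + Real.exp (-s))/2)
          ≤ Real.exp (-(u^2 * Real.exp s + Real.exp (-s))/2) := by
        apply Real.exp_le_exp.mpr; linarith
      exact mul_le_mul_of_nonneg_right this (Real.exp_pos _).le)
  linarith

lemma key (ν : ℝ) {c x y : ℝ} (hc : 0 < c) (hx : 0 < x) (hxp : x ≤ π) (hpy : π ≤ y) :
    (y ^ (-ν) * macdonaldK ν (c*y)) / (x ^ (-ν) * macdonaldK ν (c*x))
      ≤ (y/π) ^ (-ν) * Real.exp (c*(π - y)) := by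
  have hy : 0 < y := pi_pos.trans_le hpy
  have hcx : 0 < c * x := by positivity
  have hcp : 0 < c * π := by positivity
  have den_pos : 0 < x ^ (-ν) * macdonaldK ν (c*x) :=
    mul_pos (Real.rpow_pos_of_pos hx _) (K_pos ν hcx)
  rw [div_le_iff₀ den_pos]
  have hd : macdonaldK ν (c*y) ≤ Real.exp (c*π - c*y) * macdonaldK ν (c*π) :=
    K_decay ν hcp (by nlinarith)
  have hw : (c*π) ^ (-ν) * macdonaldK ν (c*π) ≤ (c*x) ^ (-ν) * macdonaldK ν (c*x) :=
    W_antitone ν hcx (by nlinarith)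
  have hw' : (π:ℝ) ^ (-ν) * macdonaldK ν (c*π) ≤ x ^ (-ν) * macdonaldK ν (c*x) := by
    rw [Real.mul_rpow hc.le pi_pos.le, Real.mul_rpow hc.le hx.le,
      mul_assoc, mul_assoc] at hw
    exact le_of_mul_le_mul_left hw (Real.rpow_pos_of_pos hc (-ν))
  have hyp : (y/π) ^ (-ν) * (π:ℝ) ^ (-ν) = y ^ (-ν) := by
    rw [← Real.mul_rpow (by positivity) pi_pos.le, div_mul_cancel₀ _ (ne_of_gt pi_pos)]
  calc y ^ (-ν) * macdonaldK ν (c*y)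
      ≤ y ^ (-ν) * (Real.exp (c*π - c*y) * macdonaldK ν (c*π)) :=
        mul_le_mul_of_nonneg_left hd (Real.rpow_nonneg hy.le _)
    _ = ((y/π) ^ (-ν) * Real.exp (c*(π - y))) * ((π:ℝ) ^ (-ν) * macdonaldK ν (c*π)) := by
        rw [← hyp, show c*(π - y) = c*π - c*y from by ring]; ring
    _ ≤ ((y/π) ^ (-ν) * Real.exp (c*(π - y))) * (x ^ (-ν) * macdonaldK ν (c*x)) :=
        mul_le_mul_of_nonneg_left hw' (by positivity)

lemma eta_bounds (j : ℤ) (hj : j ≠ 0) (ξ : ℝ) :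
    2*π*|(j:ℝ)| - |ξ| ≤ |ξ + 2*π*j| ∧ |ξ + 2*π*j| ≤ |ξ| + 2*π*|(j:ℝ)|
      ∧ (1:ℝ) ≤ |(j:ℝ)| := by
  have hj1 : (1:ℝ) ≤ |(j:ℝ)| := by
    rw [← Int.cast_abs]
    exact_mod_cast Int.one_le_abs hj
  have h2pj : |2*π*(j:ℝ)| = 2*π*|(j:ℝ)| := by
    rw [abs_mul, abs_of_pos (by positivity : (0:ℝ) < 2*π)]
  constructor
  · have h := abs_add_le (ξ + 2*π*(j:ℝ)) (-ξ)
    rw [abs_neg, show ξ + 2*π*(j:ℝ) + -ξ = 2*π*(j:ℝ) from by ring, h2pj] at h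
    linarith
  constructor
  · have h := abs_add_le ξ (2*π*(j:ℝ))
    rw [h2pj] at h
    linarith
  · exact hj1

end Aux

/-- For the multiquadric family `φ̂_c(ξ) = |ξ|^{-(a+1/2)} K_{a+1/2}(c|ξ|)` with
`|a + 1/2| ≥ 1/2` fixed and `c ≥ 1`: for `j ≠ 0` and `0 < |ξ| ≤ π`,
`φ̂_c(ξ+2πj)/φ̂_c(ξ) ≤ 3 (2|j|+1)^{|a|+1/2} exp(-2π(|j|-1))`, uniformly in `c ≥ 1`,
and for fixed `j ≠ 0`, `0 < |ξ| < π`, the ratio tends to `0` as `c → ∞`. -/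
theorem stmt13 (a : ℝ) (ha : 1 / 2 ≤ |a + 1 / 2|) :
    (∀ (c : ℝ), 1 ≤ c → ∀ (j : ℤ), j ≠ 0 → ∀ ξ : ℝ, 0 < |ξ| → |ξ| ≤ π →
      (|ξ + 2 * π * j| ^ (-(a + 1 / 2)) * macdonaldK (a + 1 / 2) (c * |ξ + 2 * π * j|)) /
          (|ξ| ^ (-(a + 1 / 2)) * macdonaldK (a + 1 / 2) (c * |ξ|)) ≤
        3 * (2 * |(j : ℝ)| + 1) ^ (|a| + 1 / 2) * Real.exp (-2 * π * (|(j : ℝ)| - 1))) ∧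
    (∀ (j : ℤ), j ≠ 0 → ∀ ξ : ℝ, 0 < |ξ| → |ξ| < π →
      Tendsto (fun c : ℝ =>
          (|ξ + 2 * π * j| ^ (-(a + 1 / 2)) * macdonaldK (a + 1 / 2) (c * |ξ + 2 * π * j|)) /
            (|ξ| ^ (-(a + 1 / 2)) * macdonaldK (a + 1 / 2) (c * |ξ|)))
        atTop (𝓝 0)) := by
  set ν := a + 1/2 with hν
  have habs : |ν| ≤ |a| + 1/2 := by
    calc |ν| ≤ |a| + |(1:ℝ)/2| := abs_add_le a (1/2)
      _ = |a| + 1/2 := by norm_num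
  constructor
  · intro c hc j hj ξ hx hxp
    obtain ⟨hylb, hyub, hj1⟩ := eta_bounds j hj ξ
    set x := |ξ| with hxdef
    set y := |ξ + 2*π*(j:ℝ)| with hydef
    have hπ := pi_pos
    have hpy : π ≤ y := by nlinarith
    have hc0 : (0:ℝ) < c := by linarith
    have hkey := key ν hc0 hx hxp hpy
    have hA : (y/π) ^ (-ν) ≤ (2*|(j:ℝ)|+1) ^ (|a| + 1/2) := by
      have h1 : (1:ℝ) ≤ y/π := (one_le_div hπ).mpr hpy
      have h2 : y/π ≤ 2*|(j:ℝ)|+1 := by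
        rw [div_le_iff₀ hπ]; nlinarith
      calc (y/π) ^ (-ν) ≤ (y/π) ^ |ν| :=
            Real.rpow_le_rpow_of_exponent_le h1 (neg_le_abs ν)
        _ ≤ (2*|(j:ℝ)|+1) ^ |ν| := Real.rpow_le_rpow (by positivity) h2 (abs_nonneg ν)
        _ ≤ (2*|(j:ℝ)|+1) ^ (|a| + 1/2) :=
            Real.rpow_le_rpow_of_exponent_le (by linarith) habs
    have hE : Real.exp (c*(π - y)) ≤ Real.exp (-2 * π * (|(j:ℝ)| - 1)) := by
      apply Real.exp_le_exp.mpr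
      have h1 : c * (π - y) ≤ 1 * (π - y) :=
        mul_le_mul_of_nonpos_right hc (by linarith)
      nlinarith
    have hZ : (0:ℝ) ≤ (2*|(j:ℝ)|+1) ^ (|a| + 1/2) * Real.exp (-2 * π * (|(j:ℝ)| - 1)) := by
      positivity
    calc (y ^ (-ν) * macdonaldK ν (c * y)) / (x ^ (-ν) * macdonaldK ν (c * x))
        ≤ (y/π) ^ (-ν) * Real.exp (c*(π - y)) := hkey
      _ ≤ (2*|(j:ℝ)|+1) ^ (|a| + 1/2) * Real.exp (-2 * π * (|(j:ℝ)| - 1)) :=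
          mul_le_mul hA hE (Real.exp_pos _).le (by positivity)
      _ ≤ 3 * (2*|(j:ℝ)|+1) ^ (|a| + 1/2) * Real.exp (-2 * π * (|(j:ℝ)| - 1)) := by
          rw [mul_assoc 3]; exact le_mul_of_one_le_left hZ (by norm_num : (1:ℝ) ≤ 3)
  · intro j hj ξ hx hxπ
    obtain ⟨hylb, hyub, hj1⟩ := eta_bounds j hj ξ
    set x := |ξ| with hxdef
    set y := |ξ + 2*π*(j:ℝ)| with hydef
    have hπ := pi_pos
    have hpy : π < y := by nlinarith
    refine squeeze_zero' (g := fun c => (y/π) ^ (-ν) * Real.exp (c*(π - y)))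
      (Filter.Eventually.of_forall fun c => ?_)
      ((eventually_ge_atTop (1:ℝ)).mono fun c hc => ?_) ?_
    · exact div_nonneg (mul_nonneg (Real.rpow_nonneg (abs_nonneg _) _) (K_nonneg _ _))
        (mul_nonneg (Real.rpow_nonneg (abs_nonneg _) _) (K_nonneg _ _))
    · exact key ν (by linarith) hx hxπ.le hpy.le
    · have hlim : Tendsto (fun c : ℝ => c * (π - y)) atTop atBot :=
        tendsto_id.atTop_mul_const_of_neg (by linarith)
      have h := (Real.tendsto_exp_atBot.comp hlim).const_mul ((y/π) ^ (-ν))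
      simpa using h
end
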